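/- Let L_n ⊆ S_n be a zigzag language and let π, ρ, σ be three consecutive permutations in J(L_n). If ρ is obtained from π by a jump of the value n and σ is obtained from ρ by a jump of the value n, then s_{n,i}^ρ = s_{n,i}^π for all i = 1,…,n−1. -/

import Mathlib

/-!
Shared definitions: permutations in one-line notation as lists of naturals,
deletion `p`, insertion `c_i`, zigzag languages, the Gray code sequence `J(L_n)`,
jumps, minimal jumps, the auxiliary sequences `s_n^π`, Algorithm M,
vincular pattern containment and 2-clumped permutations.
-/

/-- `S_n`: permutations of `{1,…,n}` in one-line notation, as lists of naturals. -/
def SymmList (n : ℕ) : Set (List ℕ) := {l | List.Perm l (List.range' 1 n)}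

/-- The identity permutation `id_n = 1 2 ⋯ n`. -/
def idPerm (n : ℕ) : List ℕ := List.range' 1 n

/-- `p(π)`: delete the largest entry `n = π.length` from the permutation `π ∈ S_n`. -/
def pdel (l : List ℕ) : List ℕ := l.erase l.length

/-- `c_i(π)`: insert the new largest value `π.length + 1` at (1-indexed) position `i`. -/
def cins (i : ℕ) (l : List ℕ) : List ℕ :=
  l.take (i - 1) ++ (l.length + 1) :: l.drop (i - 1)

/-- Zigzag languages of permutations: `L_0 = {ε}` is a zigzag language, and
`L ⊆ S_{n+1}` is a zigzag language if `p(L)` is a zigzag language and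
`c_1(π), c_{n+1}(π) ∈ L` for every `π ∈ p(L)`. -/
inductive IsZigzag : ℕ → Set (List ℕ) → Prop
  | zero : IsZigzag 0 {[]}
  | succ (n : ℕ) (L : Set (List ℕ)) :
      L ⊆ SymmList (n + 1) →
      IsZigzag n (pdel '' L) →
      (∀ l ∈ pdel '' L, cins 1 l ∈ L ∧ cins (n + 1) l ∈ L) →
      IsZigzag (n + 1) L

/-- `→c(π)`: the sequence of those `c_1(π),…,c_n(π)` lying in `L`,
in increasing order of the insertion position. -/
noncomputable def cSeq (L : Set (List ℕ)) (n : ℕ) (l : List ℕ) : List (List ℕ) :=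
  ((List.range' 1 n).map (fun i => cins i l)).filter
    (fun x => @decide (x ∈ L) (Classical.propDecidable _))

/-- The Gray code sequence `J(L_n)` of a language `L ⊆ S_n`:
`J(L_0) = ε`, and `J(L_{n+1})` is obtained from `J(L_n)` (for the language
`p(L)`) by replacing its entries alternately by `←c(π)` (the reverse of
`→c(π)`) and `→c(π)`. -/
noncomputable def Jseq : ℕ → Set (List ℕ) → List (List ℕ)
  | 0, _ => [[]]
  | (n + 1), L =>
      (((Jseq n (pdel '' L)).mapIdx
        (fun k π => if k % 2 = 0 then (cSeq L (n + 1) π).reverse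
                    else cSeq L (n + 1) π)).flatten)

/-- `ρ` is obtained from `π` by a right jump of the value `v` by `d` steps. -/
def RightJump (π ρ : List ℕ) (v d : ℕ) : Prop :=
  0 < d ∧ ∃ A B C : List ℕ, B.length = d ∧ (∀ x ∈ B, x < v) ∧
    π = A ++ v :: (B ++ C) ∧ ρ = A ++ (B ++ v :: C)

/-- `ρ` is obtained from `π` by a left jump of the value `v` by `d` steps. -/
def LeftJump (π ρ : List ℕ) (v d : ℕ) : Prop := RightJump ρ π v d

/-- A right jump that is minimal with respect to `L`: every right jump of the
same value by fewer steps yields a permutation not in `L`. -/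
def MinimalRightJump (L : Set (List ℕ)) (π ρ : List ℕ) (v d : ℕ) : Prop :=
  RightJump π ρ v d ∧ ∀ d' ρ', d' < d → RightJump π ρ' v d' → ρ' ∉ L

/-- A left jump that is minimal with respect to `L`. -/
def MinimalLeftJump (L : Set (List ℕ)) (π ρ : List ℕ) (v d : ℕ) : Prop :=
  LeftJump π ρ v d ∧ ∀ d' ρ', d' < d → LeftJump π ρ' v d' → ρ' ∉ L

/-- The auxiliary sequence `s_n^π` of a permutation `π` occurring in `J(L_n)`,
as a function of the index `i ∈ {1,…,n}` (value `0` outside this range). -/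
noncomputable def sVec : ℕ → Set (List ℕ) → List ℕ → ℕ → ℕ
  | 0, _, _, _ => 0
  | 1, _, _, i => if i = 1 then 1 else 0
  | (n + 2), L, π, i =>
      let L' := pdel '' L
      let π' := pdel π
      let cbar := if ((Jseq (n + 1) L').idxOf π') % 2 = 0
                  then (cSeq L (n + 2) π').reverse else cSeq L (n + 2) π'
      if cbar.getLast? = some π then
        (if i ≤ n then sVec (n + 1) L' π' i
         else if i = n + 1 then n + 1
         else if i = n + 2 then sVec (n + 1) L' π' (n + 1) else 0)
      else
        (if i ≤ n + 1 then sVec (n + 1) L' π' i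
         else if i = n + 2 then n + 2 else 0)

/-- `j` is at the first position of `l`, or the entry immediately left of `j`
in `l` is larger than `j`. -/
def AtLeftTurn (l : List ℕ) (j : ℕ) : Prop :=
  ∃ A B : List ℕ, l = A ++ j :: B ∧ (A = [] ∨ ∃ x, A.getLast? = some x ∧ j < x)

/-- `j` is at the last position of `l`, or the entry immediately right of `j`
in `l` is larger than `j`. -/
def AtRightTurn (l : List ℕ) (j : ℕ) : Prop :=
  ∃ A B : List ℕ, l = A ++ j :: B ∧ (B = [] ∨ ∃ x, B.head? = some x ∧ j < x)

/-- `j` is not at the first position of `l`, and the entry immediately left of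
`j` in `l` is smaller than `j`. -/
def SmallerLeftNeighbor (l : List ℕ) (j : ℕ) : Prop :=
  ∃ A B : List ℕ, ∃ x, l = A ++ j :: B ∧ A.getLast? = some x ∧ x < j

/-- `j` is not at the last position of `l`, and the entry immediately right of
`j` in `l` is smaller than `j`. -/
def SmallerRightNeighbor (l : List ℕ) (j : ℕ) : Prop :=
  ∃ A B : List ℕ, ∃ x, l = A ++ j :: B ∧ B.head? = some x ∧ x < j

/-- A state of Algorithm M: the current permutation `π` and the auxiliary
arrays `o` and `s`; `o j = false` encodes direction `L` (left) and
`o j = true` encodes `R` (right). -/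
structure MState where
  perm : List ℕ
  o : ℕ → Bool
  s : ℕ → ℕ

/-- The initial state of Algorithm M (step M1): `π = id_n`, `o_j = L`, `s_j = j`. -/
def MInit (n : ℕ) : MState := ⟨idPerm n, fun _ => false, fun j => j⟩

/-- One iteration (steps M3–M5) of Algorithm M on a language `L ⊆ S_n`:
with `j := s_n ≠ 1`, the permutation jumps minimally in the direction `o_j`
(step M4), and the arrays `o`, `s` are updated as in step M5. -/
def MStep (L : Set (List ℕ)) (n : ℕ) (σ σ' : MState) : Prop :=
  σ.s n ≠ 1 ∧
  σ'.perm ∈ L ∧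
  ((σ.o (σ.s n) = false ∧ ∃ d, MinimalLeftJump L σ.perm σ'.perm (σ.s n) d) ∨
   (σ.o (σ.s n) = true ∧ ∃ d, MinimalRightJump L σ.perm σ'.perm (σ.s n) d)) ∧
  (((σ.o (σ.s n) = false ∧ AtLeftTurn σ'.perm (σ.s n)) ∨
    (σ.o (σ.s n) = true ∧ AtRightTurn σ'.perm (σ.s n))) →
      σ'.o = Function.update σ.o (σ.s n) (!σ.o (σ.s n)) ∧
      σ'.s = Function.update (Function.update (Function.update σ.s n n) (σ.s n)
               ((Function.update σ.s n n) (σ.s n - 1))) (σ.s n - 1) (σ.s n - 1)) ∧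
  (¬ ((σ.o (σ.s n) = false ∧ AtLeftTurn σ'.perm (σ.s n)) ∨
      (σ.o (σ.s n) = true ∧ AtRightTurn σ'.perm (σ.s n))) →
      σ'.o = σ.o ∧ σ'.s = Function.update σ.s n n)

/-- `π` contains the vincular pattern `pat` whose marked adjacent pair starts
at (0-indexed) position `k` of `pat`. -/
def ContainsVincular (π pat : List ℕ) (k : ℕ) : Prop :=
  ∃ f : ℕ → ℕ, StrictMonoOn f (Set.Iio pat.length) ∧
    (∀ i < pat.length, f i < π.length) ∧
    f (k + 1) = f k + 1 ∧
    (∀ i < pat.length, ∀ j < pat.length,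
      (pat.getD i 0 < pat.getD j 0 ↔ π.getD (f i) 0 < π.getD (f j) 0))

/-- 2-clumped permutations: those avoiding the vincular patterns
`3(51)24`, `3(51)42`, `24(51)3` and `42(51)3`. -/
def TwoClumped (π : List ℕ) : Prop :=
  ¬ ContainsVincular π [3, 5, 1, 2, 4] 1 ∧ ¬ ContainsVincular π [3, 5, 1, 4, 2] 1 ∧
  ¬ ContainsVincular π [2, 4, 5, 1, 3] 2 ∧ ¬ ContainsVincular π [4, 2, 5, 1, 3] 2

/-- `S'_n`: the set of 2-clumped permutations in `S_n`. -/
def SClump (n : ℕ) : Set (List ℕ) := {l ∈ SymmList n | TwoClumped l}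

/-- `B_n`: the permutations obtained from `1` by repeatedly inserting the new
largest value at the first or the last position. -/
def Bset : ℕ → Set (List ℕ)
  | 0 => {[]}
  | 1 => {[1]}
  | (n + 2) => {l | ∃ π ∈ Bset (n + 1), l = cins 1 π ∨ l = cins (n + 2) π}


/-!
A jump of the largest value `n` does not change `p`, so `p(π) = p(ρ) = p(σ)`. The sequence
`J(L_n)` is the concatenation of the blocks `c̄(π')` over `π'` in `J(L_{n-1})`, and distinct
blocks have distinct images under `p` because `J(L_{n-1})` has no repetitions. Hence `π, ρ, σ`
lie in one block and neither `π` nor `ρ` is its last entry; for such a permutation the first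
`n - 1` entries of `s_n` are those of `s_{n-1}` at its image under `p`, which is the same for
`π` and `ρ`.
-/

open List

section Permutations

variable {n : ℕ} {l : List ℕ}

lemma length_eq_of_mem_symmList (h : l ∈ SymmList n) : l.length = n := by
  simpa using h.length_eq

lemma nodup_of_mem_symmList (h : l ∈ SymmList n) : l.Nodup :=
  h.nodup_iff.mpr nodup_range'

lemma length_succ_notMem_of_mem_symmList (h : l ∈ SymmList n) : l.length + 1 ∉ l := by
  intro hmem
  have := h.subset hmem
  simp only [mem_range'_1] at this
  rw [length_eq_of_mem_symmList h] at this
  omega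

lemma length_cins (i : ℕ) (l : List ℕ) : (cins i l).length = l.length + 1 := by
  simp only [cins, length_append, length_take, length_cons, length_drop]
  omega

lemma pdel_cins (h : l.length + 1 ∉ l) (i : ℕ) : pdel (cins i l) = l := by
  have ht : l.length + 1 ∉ l.take (i - 1) := fun hm => h (mem_of_mem_take hm)
  rw [pdel, length_cins, cins, erase_append_right _ ht, erase_cons_head, take_append_drop]

lemma idxOf_cins (h : l.length + 1 ∉ l) {i : ℕ} (hi : i ≤ l.length + 1) :
    (cins i l).idxOf (l.length + 1) = i - 1 := by
  have ht : l.length + 1 ∉ l.take (i - 1) := fun hm => h (mem_of_mem_take hm)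
  rw [cins, idxOf_append_of_notMem ht, idxOf_cons_self, length_take]
  omega

lemma cins_injOn (h : l.length + 1 ∉ l) :
    Set.InjOn (fun i => cins i l) (Set.Icc 1 (l.length + 1)) := by
  rintro i ⟨hi1, hi2⟩ j ⟨hj1, hj2⟩ hij
  have := idxOf_cins h hi2
  rw [show cins i l = cins j l from hij, idxOf_cins h hj2] at this
  omega

end Permutations

section Jumps

variable {x y : List ℕ} {v d : ℕ}

theorem RightJump.length_eq (h : RightJump x y v d) : x.length = y.length := by
  obtain ⟨-, A, B, C, -, -, rfl, rfl⟩ := h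
  simp only [length_append, length_cons]
  omega

theorem RightJump.erase_eq (hx : x.Nodup) (h : RightJump x y v d) : x.erase v = y.erase v := by
  obtain ⟨-, A, B, C, -, hB, rfl, rfl⟩ := h
  have hvA : v ∉ A := fun hv => (nodup_cons.mp (nodup_middle.mp hx)).1 (mem_append_left _ hv)
  have hvB : v ∉ B := fun hv => lt_irrefl v (hB v hv)
  rw [erase_append_right _ hvA, erase_append_right _ hvA, erase_cons_head,
    erase_append_right _ hvB, erase_cons_head]

lemma pdel_eq_of_rightJump {n : ℕ} (hx : x ∈ SymmList n) (h : RightJump x y n d) :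
    pdel x = pdel y := by
  rw [pdel, pdel, ← h.length_eq, length_eq_of_mem_symmList hx,
    h.erase_eq (nodup_of_mem_symmList hx)]

lemma pdel_eq_of_jump {n : ℕ} (hx : x ∈ SymmList n) (hy : y ∈ SymmList n)
    (h : ∃ d, LeftJump x y n d ∨ RightJump x y n d) : pdel x = pdel y := by
  obtain ⟨d, h | h⟩ := h
  · exact (pdel_eq_of_rightJump hy h).symm
  · exact pdel_eq_of_rightJump hx h

end Jumps

section Lists

variable {α β : Type*}

theorem List.getLast?_ne_of_getElem? {l : List α} (hl : l.Nodup) {t : ℕ} {x : α}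
    (hx : l[t]? = some x) (ht : t + 1 < l.length) : l.getLast? ≠ some x := by
  intro hlast
  rw [getLast?_eq_getElem?, getElem?_eq_getElem (by omega)] at hlast
  rw [getElem?_eq_getElem (by omega)] at hx
  have := hl.getElem_inj_iff.mp (Option.some_inj.mp (hx.trans hlast.symm))
  omega

theorem List.exists_mem_getElem?_succ_of_flatten {f : α → β} {bs : List (List α)}
    (hbs : bs.Pairwise fun b c => ∀ x ∈ b, ∀ y ∈ c, f x ≠ f y) {k : ℕ} {x y : α}
    (hx : bs.flatten[k]? = some x) (hy : bs.flatten[k + 1]? = some y) (hxy : f x = f y) :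
    ∃ b ∈ bs, ∃ t, b[t]? = some x ∧ b[t + 1]? = some y := by
  induction bs generalizing k with
  | nil => simp at hx
  | cons b rest ih =>
    obtain ⟨hb, hrest⟩ := pairwise_cons.mp hbs
    rw [flatten_cons] at hx hy
    by_cases hk : k + 1 < b.length
    · rw [getElem?_append_left (by omega)] at hx
      rw [getElem?_append_left hk] at hy
      exact ⟨b, mem_cons_self, k, hx, hy⟩
    by_cases hbk : b.length ≤ k
    · rw [getElem?_append_right hbk] at hx
      rw [getElem?_append_right (by omega), show k + 1 - b.length = k - b.length + 1 by omega] at hy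
      obtain ⟨c, hc, hcxy⟩ := ih hrest hx hy
      exact ⟨c, mem_cons_of_mem _ hc, hcxy⟩
    · rw [getElem?_append_left (by omega)] at hx
      rw [getElem?_append_right (by omega)] at hy
      obtain ⟨c, hc, hyc⟩ := mem_flatten.mp (mem_of_getElem? hy)
      exact absurd hxy (hb c hc x (mem_of_getElem? hx) y hyc)

end Lists

section GrayCode

variable {n : ℕ} {L : Set (List ℕ)}

lemma IsZigzag.subset_symmList (hL : IsZigzag n L) : L ⊆ SymmList n := by
  cases hL with
  | zero => rintro l rfl; simp [SymmList]
  | succ n L hs _ _ => exact hs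

lemma IsZigzag.pdel_image (hL : IsZigzag (n + 1) L) : IsZigzag n (pdel '' L) := by
  cases hL with
  | succ _ _ _ h _ => exact h

lemma mem_of_mem_cSeq {l x : List ℕ} (hx : x ∈ cSeq L n l) : x ∈ L := by
  rw [cSeq, mem_filter] at hx
  exact @of_decide_eq_true _ (Classical.propDecidable _) hx.2

lemma pdel_of_mem_cSeq {l x : List ℕ} (hl : l.length + 1 ∉ l) (hx : x ∈ cSeq L n l) :
    pdel x = l := by
  rw [cSeq, mem_filter, mem_map] at hx
  obtain ⟨⟨i, -, rfl⟩, -⟩ := hx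
  exact pdel_cins hl i

lemma nodup_cSeq {l : List ℕ} (hl : l ∈ SymmList n) : (cSeq L (n + 1) l).Nodup := by
  refine (Nodup.map_on (fun i hi j hj hij => ?_) nodup_range').filter _
  rw [mem_range'_1] at hi hj
  have hlen := length_eq_of_mem_symmList hl
  exact cins_injOn (length_succ_notMem_of_mem_symmList hl)
    ⟨hi.1, by omega⟩ ⟨hj.1, by omega⟩ hij

/-- `c̄(π')` for the entry `π'` at (0-indexed) position `k` of `J(L_{n-1})`. -/
noncomputable def zigBlock (L : Set (List ℕ)) (n k : ℕ) (l : List ℕ) : List (List ℕ) :=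
  if k % 2 = 0 then (cSeq L n l).reverse else cSeq L n l

lemma mem_zigBlock {k : ℕ} {l x : List ℕ} : x ∈ zigBlock L n k l ↔ x ∈ cSeq L n l := by
  unfold zigBlock
  split_ifs <;> simp

lemma nodup_zigBlock {k : ℕ} {l : List ℕ} :
    (zigBlock L n k l).Nodup ↔ (cSeq L n l).Nodup := by
  unfold zigBlock
  split_ifs <;> simp

lemma Jseq_succ (n : ℕ) (L : Set (List ℕ)) :
    Jseq (n + 1) L = ((Jseq n (pdel '' L)).mapIdx (zigBlock L (n + 1))).flatten :=
  rfl

lemma exists_eq_zigBlock_of_mem_mapIdx {J : List (List ℕ)} {b : List (List ℕ)}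
    (hb : b ∈ J.mapIdx (zigBlock L n)) : ∃ a, ∃ ha : a < J.length, b = zigBlock L n a J[a] := by
  obtain ⟨a, ha, rfl⟩ := mem_iff_getElem.mp hb
  exact ⟨a, by simpa using ha, getElem_mapIdx⟩

lemma pairwise_pdel_ne_zigBlocks {J : List (List ℕ)} (hJ : J.Nodup)
    (hJS : ∀ l ∈ J, l ∈ SymmList n) :
    (J.mapIdx (zigBlock L (n + 1))).Pairwise fun b c => ∀ x ∈ b, ∀ y ∈ c, pdel x ≠ pdel y := by
  rw [pairwise_iff_getElem]
  intro a a' ha ha' haa' x hx y hy hxy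
  simp only [getElem_mapIdx, mem_zigBlock] at hx hy
  rw [pdel_of_mem_cSeq (length_succ_notMem_of_mem_symmList (hJS _ (getElem_mem _))) hx,
    pdel_of_mem_cSeq (length_succ_notMem_of_mem_symmList (hJS _ (getElem_mem _))) hy,
    hJ.getElem_inj_iff] at hxy
  omega

lemma mem_of_mem_Jseq (hL : IsZigzag n L) {x : List ℕ} (hx : x ∈ Jseq n L) : x ∈ L := by
  cases hL with
  | zero => simpa [Jseq] using hx
  | succ n L _ _ _ =>
    obtain ⟨b, hb, hxb⟩ := mem_flatten.mp hx
    obtain ⟨a, ha, rfl⟩ := exists_eq_zigBlock_of_mem_mapIdx hb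
    exact mem_of_mem_cSeq (mem_zigBlock.mp hxb)

lemma Jseq_subset_symmList (hL : IsZigzag n L) : ∀ x ∈ Jseq n L, x ∈ SymmList n :=
  fun _ hx => hL.subset_symmList (mem_of_mem_Jseq hL hx)

lemma nodup_Jseq (hL : IsZigzag n L) : (Jseq n L).Nodup := by
  induction hL with
  | zero => simp [Jseq]
  | succ n L _ hz _ ih =>
    rw [Jseq_succ, nodup_flatten]
    refine ⟨fun b hb => ?_, (pairwise_pdel_ne_zigBlocks ih (Jseq_subset_symmList hz)).imp
      fun h _ hb hc => h _ hb _ hc rfl⟩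
    obtain ⟨a, ha, rfl⟩ := exists_eq_zigBlock_of_mem_mapIdx hb
    exact nodup_zigBlock.mpr (nodup_cSeq (Jseq_subset_symmList hz _ (getElem_mem _)))

/-- Distinct blocks `c̄(π')` have distinct images under `p`, so consecutive entries with the
same `p` lie in one block. -/
lemma getLast?_zigBlock_ne_of_pdel_eq (hL : IsZigzag (n + 1) L) {k : ℕ} {x y : List ℕ}
    (hx : (Jseq (n + 1) L)[k]? = some x) (hy : (Jseq (n + 1) L)[k + 1]? = some y)
    (hxy : pdel x = pdel y) :
    (zigBlock L (n + 1) ((Jseq n (pdel '' L)).idxOf (pdel x)) (pdel x)).getLast? ≠ some x := by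
  have hz := hL.pdel_image
  have hS := Jseq_subset_symmList hz
  rw [Jseq_succ] at hx hy
  obtain ⟨b, hb, t, hbx, hby⟩ := exists_mem_getElem?_succ_of_flatten
    (pairwise_pdel_ne_zigBlocks (nodup_Jseq hz) hS) hx hy hxy
  obtain ⟨a, ha, rfl⟩ := exists_eq_zigBlock_of_mem_mapIdx hb
  have hSa := hS _ (getElem_mem ha)
  have hpx : pdel x = (Jseq n (pdel '' L))[a] := pdel_of_mem_cSeq
    (length_succ_notMem_of_mem_symmList hSa) (mem_zigBlock.mp (mem_of_getElem? hbx))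
  rw [hpx, (nodup_Jseq hz).idxOf_getElem]
  exact getLast?_ne_of_getElem? (nodup_zigBlock.mpr (nodup_cSeq hSa)) hbx
    (List.getElem?_eq_some_iff.mp hby).1

lemma sVec_add_two_of_getLast?_ne {π : List ℕ} {i : ℕ}
    (h : (zigBlock L (n + 2) ((Jseq (n + 1) (pdel '' L)).idxOf (pdel π)) (pdel π)).getLast?
      ≠ some π) (hi : i ≤ n + 1) :
    sVec (n + 2) L π i = sVec (n + 1) (pdel '' L) (pdel π) i := by
  rw [sVec]
  exact (if_neg h).trans (if_pos hi)

end GrayCode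

/-- Let `L_n ⊆ S_n` be a zigzag language and let `π, ρ, σ` be
three consecutive permutations in `J(L_n)`. If `ρ` is obtained from `π` by a
jump of the value `n` and `σ` is obtained from `ρ` by a jump of the value `n`,
then `s_{n,i}^ρ = s_{n,i}^π` for all `i = 1,…,n−1`. -/
theorem sVec_stable_nn (n : ℕ) (L : Set (List ℕ)) (hL : IsZigzag n L)
    (k : ℕ) (π ρ σ : List ℕ)
    (hπ : (Jseq n L)[k]? = some π) (hρ : (Jseq n L)[k + 1]? = some ρ)
    (hσ : (Jseq n L)[k + 2]? = some σ)
    (h1 : ∃ d, LeftJump π ρ n d ∨ RightJump π ρ n d)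
    (h2 : ∃ d, LeftJump ρ σ n d ∨ RightJump ρ σ n d) :
    ∀ i, 1 ≤ i → i ≤ n - 1 → sVec n L ρ i = sVec n L π i := by
  intro i hi1 hi2
  obtain ⟨m, rfl⟩ : ∃ m, n = m + 2 := ⟨n - 2, by omega⟩
  have hS : ∀ {j x}, (Jseq (m + 2) L)[j]? = some x → x ∈ SymmList (m + 2) :=
    fun h => Jseq_subset_symmList hL _ (mem_of_getElem? h)
  have hπρ : pdel π = pdel ρ := pdel_eq_of_jump (hS hπ) (hS hρ) h1
  have hρσ : pdel ρ = pdel σ := pdel_eq_of_jump (hS hρ) (hS hσ) h2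
  rw [sVec_add_two_of_getLast?_ne (getLast?_zigBlock_ne_of_pdel_eq hL hρ hσ hρσ) (by omega),
    sVec_add_two_of_getLast?_ne (getLast?_zigBlock_ne_of_pdel_eq hL hπ hρ hπρ) (by omega), hπρ]
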